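/- arXiv:2207.02837 — 2 statements merged into one kernel-verified Lean document; each statement's English description precedes it below -/
import Mathlib

section
/- With notation as above (E invertible, B = E^T - E invertible, Λ = -B⁻¹ skew-symmetric, ⟨x,y⟩ = x^T E y, and writing m* := E^T m, *n := E n), for all a, b, c, d ∈ ℚ^m: Λ(-b* - *a, -d* - *c) = Λ((a+b)*, (c+d)*) + ⟨b, c⟩ - ⟨d, a⟩. -/
/-!
Put `B = Eᵀ - E`. Then `(a + b)* = (b* + *a) + B a`, and since `Λ B = -1` and `Bᵀ Λ = -B Λ = 1`,
pairing a `B`-image under `Λ` gives, up to sign, the dot product. Expanding `Λ((a+b)*, (c+d)*)`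
bilinearly, the three cross terms are dot products which collapse to `⟨d, a⟩ - ⟨b, c⟩`.
-/

open Matrix

section

variable {n R : Type*} [Fintype n] [CommRing R]

theorem transpose_mulVec_dotProduct (A : Matrix n n R) (x y : n → R) :
    Aᵀ *ᵥ x ⬝ᵥ y = x ⬝ᵥ A *ᵥ y := by
  rw [dotProduct_comm, dotProduct_transpose_mulVec]

theorem transpose_mulVec_add_eq (E : Matrix n n R) (x y : n → R) :
    Eᵀ *ᵥ (x + y) = (Eᵀ *ᵥ y + E *ᵥ x) + (Eᵀ - E) *ᵥ x := by
  rw [mulVec_add, sub_mulVec]; abel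

theorem neg_dotProduct_mulVec_neg (Λ : Matrix n n R) (x y : n → R) :
    -x ⬝ᵥ Λ *ᵥ -y = x ⬝ᵥ Λ *ᵥ y := by
  rw [mulVec_neg, dotProduct_neg, neg_dotProduct, neg_neg]

variable [DecidableEq n]

theorem dotProduct_mulVec_mulVec_of_mul_eq_neg_one {Λ B : Matrix n n R} (h : Λ * B = -1)
    (x y : n → R) : x ⬝ᵥ Λ *ᵥ (B *ᵥ y) = -(x ⬝ᵥ y) := by
  rw [mulVec_mulVec, h, neg_mulVec, one_mulVec, dotProduct_neg]

theorem mulVec_dotProduct_mulVec_of_mul_eq_neg_one {Λ B : Matrix n n R} (hB : Bᵀ = -B)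
    (h : B * Λ = -1) (x y : n → R) : B *ᵥ x ⬝ᵥ Λ *ᵥ y = x ⬝ᵥ y := by
  rw [← transpose_transpose B, transpose_mulVec_dotProduct, hB, mulVec_mulVec, neg_mul, h, neg_neg,
    one_mulVec]

theorem pairing_neg_transpose_mulVec_sub_mulVec {E Λ : Matrix n n R}
    (hΛB : Λ * (Eᵀ - E) = -1) (hBΛ : (Eᵀ - E) * Λ = -1) (a b c d : n → R) :
    (-(Eᵀ *ᵥ b) - E *ᵥ a) ⬝ᵥ Λ *ᵥ (-(Eᵀ *ᵥ d) - E *ᵥ c)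
      = Eᵀ *ᵥ (a + b) ⬝ᵥ Λ *ᵥ (Eᵀ *ᵥ (c + d)) + b ⬝ᵥ E *ᵥ c - d ⬝ᵥ E *ᵥ a := by
  have hBT : (Eᵀ - E)ᵀ = -(Eᵀ - E) := by rw [transpose_sub, transpose_transpose, neg_sub]
  rw [← neg_add', ← neg_add', neg_dotProduct_mulVec_neg,
    transpose_mulVec_add_eq E a b, transpose_mulVec_add_eq E c d]
  set B := Eᵀ - E with hB
  simp only [mulVec_add, dotProduct_add, add_dotProduct,
    dotProduct_mulVec_mulVec_of_mul_eq_neg_one hΛB, mulVec_dotProduct_mulVec_of_mul_eq_neg_one hBT hBΛ]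
  simp only [hB, sub_mulVec, sub_dotProduct, transpose_mulVec_dotProduct, dotProduct_transpose_mulVec]
  ring

end

theorem stmt_12_general (m : ℕ) (E B Λ : Matrix (Fin m) (Fin m) ℚ)
    (hB : B = E.transpose - E) (hBinv : IsUnit B)
    (hΛ : Λ = -B⁻¹) :
    ∀ a b c d : Fin m → ℚ,
      (-(E.transpose.mulVec b) - E.mulVec a) ⬝ᵥ
          Λ.mulVec (-(E.transpose.mulVec d) - E.mulVec c)
        = E.transpose.mulVec (a + b) ⬝ᵥ Λ.mulVec (E.transpose.mulVec (c + d))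
          + b ⬝ᵥ E.mulVec c - d ⬝ᵥ E.mulVec a := by
  have hdet : IsUnit B.det := (isUnit_iff_isUnit_det B).mp hBinv
  subst hB hΛ
  exact pairing_neg_transpose_mulVec_sub_mulVec (by rw [neg_mul, nonsing_inv_mul _ hdet])
    (by rw [mul_neg, mul_nonsing_inv _ hdet])

/-- With `E` invertible, `B = Eᵀ - E` invertible, `Λ = -B⁻¹` skew-symmetric,
`Λ(u,v) = uᵀ Λ v`, `⟨x,y⟩ = xᵀ E y`, `m* = Eᵀ m`, `*n = E n`, we have
`Λ(-b* - *a, -d* - *c) = Λ((a+b)*, (c+d)*) + ⟨b,c⟩ - ⟨d,a⟩`. -/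
theorem stmt_12 (m : ℕ) (E B Λ : Matrix (Fin m) (Fin m) ℚ)
    (hE : IsUnit E) (hB : B = E.transpose - E) (hBinv : IsUnit B)
    (hΛ : Λ = -B⁻¹) (hskew : Λ.transpose = -Λ) :
    ∀ a b c d : Fin m → ℚ,
      (-(E.transpose.mulVec b) - E.mulVec a) ⬝ᵥ
          Λ.mulVec (-(E.transpose.mulVec d) - E.mulVec c)
        = E.transpose.mulVec (a + b) ⬝ᵥ Λ.mulVec (E.transpose.mulVec (c + d))
          + b ⬝ᵥ E.mulVec c - d ⬝ᵥ E.mulVec a :=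
  stmt_12_general m E B Λ hB hBinv hΛ
end

section
/- Let 0 → N → N ⊕ M → M → 0 be the split exact sequence of modules over a finite ring (or objects of a finitary abelian category over a finite field). Then for any class e in the Grothendieck group, |Gr_e(M ⊕ N)| = ∑ q^{dim Hom(B, C)} g^M_{A,B} g^N_{C,D}, where the sum is over isomorphism classes A, B, C, D with [B] + [D] = e, g^M_{A,B} is the number of submodules B' ⊆ M with B' ≅ B and M/B' ≅ A, q = |k|, and Gr_e(X) denotes the set of submodules of X of class e. -/
/-!
A submodule `W ≤ M × N` determines `B = π₁(W) ≤ M` and `D = W ∩ N ≤ N`, whose classes add up to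
the class of `W`, and `W` is the graph of the well-defined linear map `B → N ⧸ D`, `m ↦ n + D`
for any `(m, n) ∈ W`. Conversely the graph of any linear map `B → N ⧸ D` has invariants `(B, D)`,
so sorting `Gr_e(M ⊕ N)` by `(B, D)` gives fibres in bijection with `Hom(B, N ⧸ D)`.
-/

namespace Submodule

variable {R M N : Type*} [Ring R] [AddCommGroup M] [AddCommGroup N] [Module R M] [Module R N]

def graphQuot (B : Submodule R M) (D : Submodule R N) (f : B →ₗ[R] N ⧸ D) :
    Submodule R (M × N) where
  carrier := {p | ∃ h : p.1 ∈ B, D.mkQ p.2 = f ⟨p.1, h⟩}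
  zero_mem' := ⟨B.zero_mem, by rw [Prod.snd_zero, map_zero]; exact (map_zero f).symm⟩
  add_mem' := by
    rintro p p' ⟨h, hf⟩ ⟨h', hf'⟩
    exact ⟨B.add_mem h h', by rw [Prod.snd_add, map_add, hf, hf']; exact (map_add f _ _).symm⟩
  smul_mem' := by
    rintro c p ⟨h, hf⟩
    exact ⟨B.smul_mem c h, by rw [Prod.smul_snd, map_smul, hf]; exact (map_smul f _ _).symm⟩

variable {B : Submodule R M} {D : Submodule R N} {f : B →ₗ[R] N ⧸ D}

lemma mem_graphQuot {p : M × N} :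
    p ∈ graphQuot B D f ↔ ∃ h : p.1 ∈ B, D.mkQ p.2 = f ⟨p.1, h⟩ :=
  Iff.rfl

lemma graphQuot_map_fst : (graphQuot B D f).map (LinearMap.fst R M N) = B := by
  refine le_antisymm (map_le_iff_le_comap.mpr fun p ⟨h, _⟩ ↦ h) fun m hm ↦ ?_
  obtain ⟨n, hn⟩ := D.mkQ_surjective (f ⟨m, hm⟩)
  exact ⟨(m, n), ⟨hm, hn⟩, rfl⟩

lemma graphQuot_comap_inr : (graphQuot B D f).comap (LinearMap.inr R M N) = D := by
  have hf0 (h : (0 : M) ∈ B) : f ⟨0, h⟩ = 0 := map_zero f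
  ext n
  simp [mem_graphQuot, hf0]

lemma graphQuot_injective : Function.Injective (graphQuot (R := R) B D) := by
  intro f f' hff'
  ext b
  obtain ⟨n, hn⟩ := D.mkQ_surjective (f b)
  have hmem : (b.1, n) ∈ graphQuot B D f' := hff' ▸ ⟨b.2, hn⟩
  obtain ⟨_, hn'⟩ := mem_graphQuot.mp hmem
  exact hn.symm.trans hn'

lemma mkQ_comap_inr_eq_of_mk_mem {W : Submodule R (M × N)} {m : M} {n n' : N}
    (h : (m, n) ∈ W) (h' : (m, n') ∈ W) :
    (W.comap (LinearMap.inr R M N)).mkQ n = (W.comap (LinearMap.inr R M N)).mkQ n' := by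
  rw [mkQ_apply, mkQ_apply, Quotient.eq]
  simpa using W.sub_mem h h'

lemma exists_graphQuot_eq (W : Submodule R (M × N)) :
    ∃ f, graphQuot (W.map (LinearMap.fst R M N)) (W.comap (LinearMap.inr R M N)) f = W := by
  set B := W.map (LinearMap.fst R M N)
  set D := W.comap (LinearMap.inr R M N)
  have lift : ∀ b : B, ∃ n, ((b : M), n) ∈ W := fun ⟨_, ⟨(m, n), hw, rfl⟩⟩ ↦ ⟨n, hw⟩
  choose g hg using lift
  let f : B →ₗ[R] N ⧸ D :=
    { toFun b := D.mkQ (g b)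
      map_add' b b' := by
        rw [← map_add]
        exact mkQ_comap_inr_eq_of_mk_mem (hg _) (by simpa using W.add_mem (hg b) (hg b'))
      map_smul' c b := by
        rw [← map_smul]
        exact mkQ_comap_inr_eq_of_mk_mem (hg _) (by simpa using W.smul_mem c (hg b)) }
  refine ⟨f, le_antisymm ?_ ?_⟩
  · rintro ⟨m, n⟩ ⟨hm, hf⟩
    have hD : n - g ⟨m, hm⟩ ∈ D := (Quotient.eq D).mp hf
    simpa using W.add_mem hD (hg ⟨m, hm⟩)
  · rintro ⟨m, n⟩ hw
    have hm : m ∈ B := ⟨(m, n), hw, rfl⟩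
    exact ⟨hm, mkQ_comap_inr_eq_of_mk_mem hw (hg ⟨m, hm⟩)⟩

noncomputable def graphQuotEquiv (B : Submodule R M) (D : Submodule R N) :
    (B →ₗ[R] N ⧸ D) ≃ {W : Submodule R (M × N) //
      W.map (LinearMap.fst R M N) = B ∧ W.comap (LinearMap.inr R M N) = D} :=
  Equiv.ofBijective (fun f ↦ ⟨graphQuot B D f, graphQuot_map_fst, graphQuot_comap_inr⟩)
    ⟨fun _ _ h ↦ graphQuot_injective (congrArg Subtype.val h), by
      rintro ⟨W, rfl, rfl⟩
      obtain ⟨f, hf⟩ := exists_graphQuot_eq W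
      exact ⟨f, Subtype.ext hf⟩⟩

end Submodule

section Counting

variable {α β γ G : Type*} [AddCommMonoid G] (p : α → β) (q : α → γ)
  {cl : α → G} {clβ : β → G} {clγ : γ → G}

open Classical in
lemma Nat.card_fiber_eq_ite_of_add (hcl : ∀ a, cl a = clβ (p a) + clγ (q a))
    (e : G) (b : β) (c : γ) :
    Nat.card {x : {a // cl a = e} // (p x, q x) = (b, c)} =
      if clβ b + clγ c = e then Nat.card {a // p a = b ∧ q a = c} else 0 := by
  split_ifs with he
  · exact Nat.card_congr <| (Equiv.subtypeEquivRight fun _ ↦ Prod.mk_inj).trans <|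
      Equiv.subtypeSubtypeEquivSubtype (q := fun a ↦ p a = b ∧ q a = c) fun ⟨hb, hc⟩ ↦ by
        rw [hcl, hb, hc, he]
  · have : IsEmpty {x : {a // cl a = e} // (p x, q x) = (b, c)} :=
      ⟨fun ⟨⟨a, ha⟩, hbc⟩ ↦ he <| by
        obtain ⟨rfl, rfl⟩ := Prod.mk_inj.mp hbc
        rw [← hcl, ha]⟩
    exact Nat.card_of_isEmpty

lemma Nat.card_subtype_eq_finsum_of_add [Finite α] [Finite β] [Finite γ]
    (hcl : ∀ a, cl a = clβ (p a) + clγ (q a)) (e : G) :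
    Nat.card {a // cl a = e} =
      ∑ᶠ (b : β) (c : γ) (_ : clβ b + clγ c = e), Nat.card {a // p a = b ∧ q a = c} := by
  classical
  have := Fintype.ofFinite β
  have := Fintype.ofFinite γ
  calc Nat.card {a // cl a = e}
      = ∑ bc : β × γ, Nat.card {x : {a // cl a = e} // (p x, q x) = bc} := by
        rw [← Nat.card_sigma, Nat.card_congr (Equiv.sigmaFiberEquiv _)]
    _ = ∑ b, ∑ c, if clβ b + clγ c = e then Nat.card {a // p a = b ∧ q a = c} else 0 := by
        simp only [Fintype.sum_prod_type, Nat.card_fiber_eq_ite_of_add p q hcl]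
    _ = _ := by simp only [finsum_eq_if, finsum_eq_sum_of_fintype]

end Counting

/-- Over a field with `q` elements, `|Hom(B, N ⧸ D)| = q^{dim Hom(B, N ⧸ D)}`, so grouping the
submodules `B ≤ M`, `D ≤ N` by the isomorphism classes of `M ⧸ B, B, N ⧸ D, D` turns the
right-hand side into the paper's `∑ q^{dim Hom(B, C)} g^M_{A,B} g^N_{C,D}`. -/
theorem stmt_16_general (A : Type) [Ring A]
    (M N : Type) [AddCommGroup M] [AddCommGroup N] [Module A M] [Module A N]
    [Fintype M] [Fintype N]
    (G : Type) [AddCommMonoid G]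
    (clP : Submodule A (M × N) → G) (clM : Submodule A M → G)
    (clN : Submodule A N → G)
    (hadd : ∀ W : Submodule A (M × N),
      clP W = clM (W.map (LinearMap.fst A M N)) + clN (W.comap (LinearMap.inr A M N)))
    (e : G) :
    Nat.card {W : Submodule A (M × N) // clP W = e} =
      ∑ᶠ (B : Submodule A M) (D : Submodule A N) (_ : clM B + clN D = e),
        Nat.card (B →ₗ[A] N ⧸ D) := by
  rw [Nat.card_subtype_eq_finsum_of_add _ _ hadd]
  simp only [Nat.card_congr (Submodule.graphQuotEquiv _ _)]

/-- Hubery's counting lemma for the split exact sequence `0 → N → M ⊕ N → M → 0` over a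
finite ring: for any Grothendieck-group-style class function (`clP`, `clM`, `clN`,
additive with respect to the canonical sub/quotient decomposition of a submodule
`W ≤ M × N`, i.e. `0 → W ∩ N → W → π(W) → 0`) and any class `e`,
`|Gr_e(M ⊕ N)| = ∑_{B ≤ M, D ≤ N, [B]+[D]=e} |Hom(B, N/D)|`.
(The right-hand side equals `∑ q^{dim Hom(B,C)} g^M_{A,B} g^N_{C,D}` after grouping
submodules `B ≤ M`, `D ≤ N` by the isomorphism classes of `(M/B', B')`, `(N/D', D')`.) -/
theorem stmt_16 (A : Type) [Ring A] [Fintype A]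
    (M N : Type) [AddCommGroup M] [AddCommGroup N] [Module A M] [Module A N]
    [Fintype M] [Fintype N]
    (G : Type) [AddCommMonoid G]
    (clP : Submodule A (M × N) → G) (clM : Submodule A M → G)
    (clN : Submodule A N → G)
    (hadd : ∀ W : Submodule A (M × N),
      clP W = clM (W.map (LinearMap.fst A M N)) + clN (W.comap (LinearMap.inr A M N)))
    (e : G) :
    Nat.card {W : Submodule A (M × N) // clP W = e} =
      ∑ᶠ (B : Submodule A M) (D : Submodule A N) (_ : clM B + clN D = e),
        Nat.card (B →ₗ[A] N ⧸ D) :=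
  stmt_16_general A M N G clP clM clN hadd e
end
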